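/- Let a : ℤ → ℂ^{r×r} be a finitely supported matrix-valued mask, v : ℤ → ℂ^{1×r} finitely supported, m ∈ ℕ, and p⃗ := ((·)^m/m!) * v. If the condition v̂(2ξ) â(ξ+π) = O(|ξ|^{m+1}) as ξ → 0 holds (meaning all derivatives of order ≤ m of ξ ↦ v̂(2ξ)â(ξ+π) vanish at ξ = 0), then S_a p⃗ is a vector polynomial of degree at most m, and moreover S_a p⃗ = (p⃗(·/2)) * a, where the subdivision operator is (S_a w)(j) := 2 ∑_{k∈ℤ} w(k) a(j − 2k) and (q⃗ * a)(x) := ∑_{k∈ℤ} q⃗(x−k) a(k). -/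

import Mathlib

/-! Fix `x` and `ℓ` and put `c n := ∑ i, a(n)_{iℓ} pᵢ((x - n)/2)`. Then
`(S_a p⃗)(x) = 2 ∑_k c(x - 2k)` is twice the sum of `c` over `n ≡ x (mod 2)`, while
`(p⃗(·/2) * a)(x) = ∑_n c n`; the two differ by `± ∑_n (-1)ⁿ c n`. Expanding
`pᵢ = ((·)^m/m!) * vᵢ`, this alternating sum is a combination of the `(x - (n + 2s))^m` with
weights `(-1)ⁿ a(n)_{iℓ} v(s)_i`, and it vanishes because the moments of order `≤ m` of these
weights are, up to `(-i)^j`, the derivatives at `0` of `v̂(2ξ) â(ξ + π)`. -/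

open Complex Polynomial

/-- Symbol (Fourier series) of a scalar sequence. -/
noncomputable def symb (u : ℤ → ℂ) (ξ : ℂ) : ℂ :=
  ∑ᶠ k : ℤ, u k * Complex.exp (-Complex.I * k * ξ)

/-- Entrywise symbol of a matrix-valued sequence. -/
noncomputable def symbM {r : ℕ} (a : ℤ → Fin r → Fin r → ℂ) (i ℓ : Fin r) (ξ : ℂ) : ℂ :=
  ∑ᶠ k : ℤ, a k i ℓ * Complex.exp (-Complex.I * k * ξ)

/-- Vector subdivision operator `(S_a w)(j) := 2 ∑_k w(k) a(j − 2k)` on row-vector sequences. -/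
noncomputable def sd {r : ℕ} (a : ℤ → Fin r → Fin r → ℂ) (w : ℤ → Fin r → ℂ) :
    ℤ → Fin r → ℂ :=
  fun j ℓ => 2 * ∑ᶠ k : ℤ, ∑ i : Fin r, w k i * a (j - 2 * k) i ℓ

/-- Convolution of a polynomial with a finitely supported sequence, as a polynomial. -/
noncomputable def pconv (q : Polynomial ℂ) (u : ℤ → ℂ) : Polynomial ℂ :=
  ∑ᶠ k : ℤ, u k • (q.comp (Polynomial.X - Polynomial.C (k : ℂ)))

open Function

theorem exp_neg_I_mul_int_mul_add_pi (n : ℤ) (ξ : ℂ) :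
    exp (-I * n * (ξ + Real.pi)) = (-1) ^ n * exp (-I * n * ξ) := by
  have h : exp (-I * n * Real.pi) = (-1) ^ n := by
    rw [show -I * n * Real.pi = n * -(Real.pi * I) by ring, exp_int_mul, exp_neg, exp_pi_mul_I,
      inv_neg, inv_one]
  rw [mul_add, exp_add, h, mul_comm]

theorem symb_eq_sum {u : ℤ → ℂ} {s : Finset ℤ} (hs : ∀ k ∉ s, u k = 0) (ξ : ℂ) :
    symb u ξ = ∑ k ∈ s, u k * exp (-I * k * ξ) :=
  finsum_eq_sum_of_support_subset _ <| support_subset_iff'.2 fun k hk => by simp [hs k hk]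

theorem iteratedDeriv_sum_mul_cexp {ι : Type*} (s : Finset ι) (c μ : ι → ℂ) (j : ℕ) (z : ℂ) :
    iteratedDeriv j (fun ξ => ∑ t ∈ s, c t * exp (μ t * ξ)) z
      = ∑ t ∈ s, c t * μ t ^ j * exp (μ t * z) := by
  rw [iteratedDeriv_fun_sum fun t _ => by fun_prop]
  refine Finset.sum_congr rfl fun t _ => ?_
  rw [iteratedDeriv_const_mul_field, iteratedDeriv_cexp_const_mul, mul_assoc]

theorem sum_mul_pow_eq_zero_of_iteratedDeriv_eq_zero {ι : Type*} {s : Finset ι} {c w : ι → ℂ}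
    {m : ℕ} (h : ∀ j ≤ m, iteratedDeriv j (fun ξ => ∑ t ∈ s, c t * exp (-I * w t * ξ)) 0 = 0)
    {j : ℕ} (hj : j ≤ m) : ∑ t ∈ s, c t * w t ^ j = 0 := by
  have := h j hj
  simp only [iteratedDeriv_sum_mul_cexp, mul_zero, exp_zero, mul_one, mul_pow,
    ← mul_assoc, mul_right_comm _ ((-I) ^ j), ← Finset.sum_mul] at this
  exact (mul_eq_zero.1 this).resolve_right (pow_ne_zero _ (neg_ne_zero.2 I_ne_zero))

theorem sum_mul_sub_pow_eq_zero {R ι : Type*} [CommRing R] {s : Finset ι} {c w : ι → R} {m : ℕ}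
    (h : ∀ j ≤ m, ∑ t ∈ s, c t * w t ^ j = 0) (z : R) : ∑ t ∈ s, c t * (z - w t) ^ m = 0 := by
  simp only [sub_pow, Finset.mul_sum]
  rw [Finset.sum_comm]
  refine Finset.sum_eq_zero fun k hk => ?_
  calc _ = (-1) ^ (k + m) * z ^ k * m.choose k * ∑ t ∈ s, c t * w t ^ (m - k) := by
        rw [Finset.mul_sum]
        exact Finset.sum_congr rfl fun t _ => by ring
    _ = 0 := by rw [h _ (Nat.sub_le m k), mul_zero]

theorem two_mul_finsum_comp_sub_two_mul {c : ℤ → ℂ} (hc : (support c).Finite) (x : ℤ) :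
    2 * ∑ᶠ k, c (x - 2 * k) = ∑ᶠ n, c n + (-1) ^ x * ∑ᶠ n, (-1) ^ n * c n := by
  have hinj : Injective fun k : ℤ => x - 2 * k := fun k l hkl => by simpa using hkl
  have hrange : Set.range (fun k : ℤ => x - 2 * k) = {n | Even (x - n)} := by
    ext n
    simp only [Set.mem_range, Set.mem_ofPred_eq, Even]
    exact ⟨fun ⟨k, hk⟩ => ⟨k, by omega⟩, fun ⟨k, hk⟩ => ⟨k, by omega⟩⟩
  rw [← finsum_mem_range hinj, hrange, finsum_mem_def]
  simp only [mul_finsum]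
  have hc' : (support fun n => (-1 : ℂ) ^ x * ((-1) ^ n * c n)).Finite :=
    hc.subset fun n hn => right_ne_zero_of_mul (right_ne_zero_of_mul hn)
  rw [← finsum_add_distrib hc hc']
  refine finsum_congr fun n => ?_
  -- `2 · 1[x - n even] = 1 + (-1)^(x + n)`
  rw [← mul_assoc, ← zpow_add₀ (by norm_num : (-1 : ℂ) ≠ 0)]
  by_cases h : Even (x - n)
  · have : Even (x + n) := by simpa [Int.even_add, Int.even_sub] using h
    rw [Set.indicator_of_mem (show n ∈ {n | Even (x - n)} from h), this.neg_one_zpow]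
    ring
  · have : Odd (x + n) := by simpa [← Int.not_even_iff_odd, Int.even_add, Int.even_sub] using h
    rw [Set.indicator_of_notMem (show n ∉ {n | Even (x - n)} from h), this.neg_one_zpow]
    ring

theorem pconv_eq_sum {q : ℂ[X]} {u : ℤ → ℂ} {s : Finset ℤ} (hs : ∀ k ∉ s, u k = 0) :
    pconv q u = ∑ k ∈ s, u k • q.comp (X - C (k : ℂ)) :=
  finsum_eq_sum_of_support_subset _ <| support_subset_iff'.2 fun k hk => by simp [hs k hk]

theorem natDegree_pconv_le {q : ℂ[X]} {u : ℤ → ℂ} {s : Finset ℤ} (hs : ∀ k ∉ s, u k = 0) :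
    (pconv q u).natDegree ≤ q.natDegree := by
  rw [pconv_eq_sum hs]
  refine natDegree_sum_le_of_forall_le _ _ fun k _ => (natDegree_smul_le _ _).trans ?_
  rw [natDegree_comp, natDegree_X_sub_C, mul_one]

theorem eval_pconv {q : ℂ[X]} {u : ℤ → ℂ} {s : Finset ℤ} (hs : ∀ k ∉ s, u k = 0) (z : ℂ) :
    (pconv q u).eval z = ∑ k ∈ s, u k * q.eval (z - k) := by
  simp [pconv_eq_sum hs, eval_finsetSum]

/-- `(p⃗(·/2)) * a` in the notation of the paper. -/
noncomputable def halfConv {r : ℕ} (a : ℤ → Fin r → Fin r → ℂ) (P : Fin r → ℂ[X]) (ℓ : Fin r) :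
    ℂ[X] :=
  ∑ᶠ k : ℤ, ∑ i : Fin r, a k i ℓ • (P i).comp (C (2 : ℂ)⁻¹ * (X - C (k : ℂ)))

section

variable {r : ℕ} {a : ℤ → Fin r → Fin r → ℂ} {A : Finset ℤ}

theorem halfConv_eq_sum (hA : ∀ k ∉ A, a k = 0) (P : Fin r → ℂ[X]) (ℓ : Fin r) :
    halfConv a P ℓ = ∑ k ∈ A, ∑ i, a k i ℓ • (P i).comp (C (2 : ℂ)⁻¹ * (X - C (k : ℂ))) :=
  finsum_eq_sum_of_support_subset _ <| support_subset_iff'.2 fun k hk => by simp [hA k hk]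

theorem natDegree_halfConv_le (hA : ∀ k ∉ A, a k = 0) {P : Fin r → ℂ[X]} {m : ℕ}
    (hP : ∀ i, (P i).natDegree ≤ m) (ℓ : Fin r) : (halfConv a P ℓ).natDegree ≤ m := by
  rw [halfConv_eq_sum hA]
  refine natDegree_sum_le_of_forall_le _ _ fun k _ => natDegree_sum_le_of_forall_le _ _ fun i _ =>
    (natDegree_smul_le _ _).trans ?_
  rw [natDegree_comp, natDegree_C_mul (inv_ne_zero two_ne_zero), natDegree_X_sub_C, mul_one]
  exact hP i

theorem eval_halfConv (hA : ∀ k ∉ A, a k = 0) (P : Fin r → ℂ[X]) (ℓ : Fin r) (z : ℂ) :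
    (halfConv a P ℓ).eval z = ∑ n ∈ A, ∑ i, a n i ℓ * (P i).eval ((z - n) / 2) := by
  simp [halfConv_eq_sum hA, eval_finsetSum, div_eq_inv_mul]

theorem sd_eval_eq_eval_halfConv_add (hA : ∀ k ∉ A, a k = 0) (P : Fin r → ℂ[X]) (x : ℤ)
    (ℓ : Fin r) :
    sd a (fun k i => (P i).eval (k : ℂ)) x ℓ = (halfConv a P ℓ).eval (x : ℂ)
      + (-1) ^ x * ∑ n ∈ A, (-1) ^ n * ∑ i, a n i ℓ * (P i).eval (((x : ℂ) - n) / 2) := by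
  set c : ℤ → ℂ := fun n => ∑ i, a n i ℓ * (P i).eval (((x : ℂ) - n) / 2)
  have hc : support c ⊆ A := support_subset_iff'.2 fun n hn => by simp [c, hA n hn]
  have hsd : sd a (fun k i => (P i).eval (k : ℂ)) x ℓ = 2 * ∑ᶠ k, c (x - 2 * k) := by
    refine congrArg (2 * ·) (finsum_congr fun k => Finset.sum_congr rfl fun i _ => ?_)
    rw [mul_comm]
    push_cast
    ring_nf
  rw [hsd, two_mul_finsum_comp_sub_two_mul (A.finite_toSet.subset hc), eval_halfConv hA,
    finsum_eq_sum_of_support_subset c hc,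
    finsum_eq_sum_of_support_subset _ ((support_mul_subset_right _ _).trans hc)]

end

theorem sum_neg_one_zpow_mul_eval_pconv_eq_zero {r m : ℕ} {a : ℤ → Fin r → Fin r → ℂ}
    {v : ℤ → Fin r → ℂ} {A T : Finset ℤ} (hA : ∀ k ∉ A, a k = 0) (hT : ∀ s ∉ T, v s = 0)
    {ℓ : Fin r} (hO : ∀ j ≤ m, iteratedDeriv j
      (fun ξ : ℂ => ∑ i, symb (fun k => v k i) (2 * ξ) * symbM a i ℓ (ξ + Real.pi)) 0 = 0)
    (z : ℂ) :
    ∑ n ∈ A, (-1) ^ n * ∑ i, a n i ℓ *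
      (pconv (C (m.factorial : ℂ)⁻¹ * X ^ m) fun k => v k i).eval ((z - n) / 2) = 0 := by
  set S : Finset (Fin r × ℤ × ℤ) := Finset.univ ×ˢ (A ×ˢ T)
  set c : Fin r × ℤ × ℤ → ℂ := fun t => (-1) ^ t.2.1 * a t.2.1 t.1 ℓ * v t.2.2 t.1
  set w : Fin r × ℤ × ℤ → ℂ := fun t => t.2.1 + 2 * t.2.2
  have hTi : ∀ i, ∀ k ∉ T, v k i = 0 := fun i k hk => by simp [hT k hk]
  have hAi : ∀ i, ∀ k ∉ A, a k i ℓ = 0 := fun i k hk => by simp [hA k hk]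
  have hsymb : (fun ξ : ℂ => ∑ i, symb (fun k => v k i) (2 * ξ) * symbM a i ℓ (ξ + Real.pi))
      = fun ξ => ∑ t ∈ S, c t * exp (-I * w t * ξ) := by
    funext ξ
    have hsymbM : ∀ i, symbM a i ℓ = symb fun k => a k i ℓ := fun _ => rfl
    simp only [hsymbM, fun i => symb_eq_sum (hTi i), fun i => symb_eq_sum (hAi i),
      exp_neg_I_mul_int_mul_add_pi, Finset.sum_mul_sum, S, Finset.sum_product]
    refine Finset.sum_congr rfl fun i _ => ?_
    rw [Finset.sum_comm]
    refine Finset.sum_congr rfl fun n _ => Finset.sum_congr rfl fun s _ => ?_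
    rw [show -I * w (i, n, s) * ξ = -I * n * ξ + -I * s * (2 * ξ) by simp only [w]; ring, exp_add]
    ring
  have hmoment := sum_mul_sub_pow_eq_zero
    (fun j hj => sum_mul_pow_eq_zero_of_iteratedDeriv_eq_zero (hsymb ▸ hO) hj) z
  calc _ = (m.factorial : ℂ)⁻¹ * 2⁻¹ ^ m * ∑ t ∈ S, c t * (z - w t) ^ m := by
        have hP : ∀ i y, (pconv (C (m.factorial : ℂ)⁻¹ * X ^ m) fun k => v k i).eval y
            = ∑ s ∈ T, v s i * ((m.factorial : ℂ)⁻¹ * (y - s) ^ m) := fun i y => by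
          simp [eval_pconv (hTi i)]
        simp only [hP, S, Finset.sum_product, Finset.mul_sum]
        rw [Finset.sum_comm]
        refine Finset.sum_congr rfl fun i _ => Finset.sum_congr rfl fun n _ =>
          Finset.sum_congr rfl fun s _ => ?_
        simp only [c, w]
        rw [show (z - n) / 2 - s = 2⁻¹ * (z - (n + 2 * s)) by ring, mul_pow]
        ring
    _ = 0 := by rw [hmoment, mul_zero]

/-- if `v̂(2ξ)â(ξ+π) = O(|ξ|^{m+1})`, then `S_a p⃗` is a vector polynomial of
degree ≤ m, and `S_a p⃗ = (p⃗(·/2)) * a`, where `p⃗ := ((·)^m/m!) * v`. -/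
theorem stmt5 (r m : ℕ) (a : ℤ → Fin r → Fin r → ℂ)
    (ha : (Function.support a).Finite)
    (v : ℤ → Fin r → ℂ) (hv : (Function.support v).Finite)
    (P : Fin r → Polynomial ℂ)
    (hPdef : ∀ ℓ, P ℓ = pconv (Polynomial.C ((Nat.factorial m : ℂ))⁻¹ * Polynomial.X ^ m)
      (fun k => v k ℓ))
    (hO : ∀ j ≤ m, ∀ ℓ : Fin r,
      iteratedDeriv j
        (fun ξ : ℂ => ∑ i : Fin r, symb (fun k => v k i) (2 * ξ) *
          symbM a i ℓ (ξ + (Real.pi : ℂ))) 0 = 0) :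
    ∃ Q : Fin r → Polynomial ℂ,
      (∀ ℓ, (Q ℓ).natDegree ≤ m) ∧
      (∀ x : ℤ, ∀ ℓ, sd a (fun k i => (P i).eval ((k : ℤ) : ℂ)) x ℓ = (Q ℓ).eval ((x : ℂ))) ∧
      (∀ ℓ, Q ℓ = ∑ᶠ k : ℤ, ∑ i : Fin r,
        a k i ℓ • ((P i).comp (Polynomial.C ((2 : ℂ))⁻¹ *
          (Polynomial.X - Polynomial.C ((k : ℂ)))))) := by
  have hA : ∀ k ∉ ha.toFinset, a k = 0 := fun k hk => by simpa using hk
  have hT : ∀ s ∉ hv.toFinset, v s = 0 := fun s hs => by simpa using hs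
  obtain rfl : P = fun i => pconv (C (m.factorial : ℂ)⁻¹ * X ^ m) fun k => v k i := funext hPdef
  refine ⟨halfConv a _, natDegree_halfConv_le hA fun i => ?_, fun x ℓ => ?_, fun ℓ => rfl⟩
  · exact (natDegree_pconv_le (s := hv.toFinset) fun k hk => by simp [hT k hk]).trans
      (natDegree_C_mul_X_pow_le _ _)
  · rw [sd_eval_eq_eval_halfConv_add hA,
      sum_neg_one_zpow_mul_eval_pconv_eq_zero hA hT (hO · · ℓ), mul_zero, add_zero]
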